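/- Suppose t > B⁺ = (b−1)*(a+b) − b*(d+1). For every v ∈ S⁺₁₂(t), the image φ12(v) is reducible in O⁺_{t+ρ} if and only if v is reducible in O⁺_t; likewise, for every v ∈ S⁺₀₂(t), the image φ02(v) is reducible in O⁺_{t+ρ} if and only if v is reducible in O⁺_t. -/
import Mathlib


/-- The factorization homomorphism `π_t` for the shifted numerical semigroup
`M_t = ⟨t - d*a, t, t + d*b⟩`, applied to `v = (v0, v1, v2) ∈ ℤ³`. -/
def pi3 (a b d t : ℤ) (v : ℤ × ℤ × ℤ) : ℤ :=
  (t - d * a) * v.1 + t * v.2.1 + (t + d * b) * v.2.2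

/-- The length (coordinate sum) `ℓ(v)` of `v ∈ ℤ³`. -/
def len3 (v : ℤ × ℤ × ℤ) : ℤ := v.1 + v.2.1 + v.2.2

/-- The trade lattice `L_t = ker π_t`. -/
def L3 (a b d t : ℤ) : Set (ℤ × ℤ × ℤ) := {v | pi3 a b d t v = 0}

/-- The orthant `O⁺_t = {v ∈ L_t : v0 ≥ 0, v1 ≥ 0}`. -/
def OPlus (a b d t : ℤ) : Set (ℤ × ℤ × ℤ) :=
  {v ∈ L3 a b d t | 0 ≤ v.1 ∧ 0 ≤ v.2.1}

/-- The orthant `O±_t = {v ∈ L_t : v0 ≥ 0, v2 ≥ 0}`. -/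
def OPm (a b d t : ℤ) : Set (ℤ × ℤ × ℤ) :=
  {v ∈ L3 a b d t | 0 ≤ v.1 ∧ 0 ≤ v.2.2}

/-- The orthant `O⁻_t = {v ∈ L_t : v1 ≥ 0, v2 ≥ 0}`. -/
def OMinus (a b d t : ℤ) : Set (ℤ × ℤ × ℤ) :=
  {v ∈ L3 a b d t | 0 ≤ v.2.1 ∧ 0 ≤ v.2.2}

/-- `φ01(v) = v + b*(a+b)*ℓ(v)*(1, -1, 0)`. -/
def phi01 (a b : ℤ) (v : ℤ × ℤ × ℤ) : ℤ × ℤ × ℤ :=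
  v + (b * (a + b) * len3 v) • ((1 : ℤ), (-1 : ℤ), (0 : ℤ))

/-- `φ02(v) = v + a*b*ℓ(v)*(1, 0, -1)`. -/
def phi02 (a b : ℤ) (v : ℤ × ℤ × ℤ) : ℤ × ℤ × ℤ :=
  v + (a * b * len3 v) • ((1 : ℤ), (0 : ℤ), (-1 : ℤ))

/-- `φ12(v) = v + a*(a+b)*ℓ(v)*(0, 1, -1)`. -/
def phi12 (a b : ℤ) (v : ℤ × ℤ × ℤ) : ℤ × ℤ × ℤ :=
  v + (a * (a + b) * len3 v) • ((0 : ℤ), (1 : ℤ), (-1 : ℤ))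

/-- `v` is reducible in the orthant `O` if it is a sum of two nonzero elements of `O`. -/
def Reducible (O : Set (ℤ × ℤ × ℤ)) (v : ℤ × ℤ × ℤ) : Prop :=
  ∃ u w : ℤ × ℤ × ℤ, u ∈ O ∧ w ∈ O ∧ u ≠ 0 ∧ w ≠ 0 ∧ v = u + w

/-- The Hilbert basis of the orthant `O`: its irreducible elements. -/
def HB (O : Set (ℤ × ℤ × ℤ)) : Set (ℤ × ℤ × ℤ) :=
  {v ∈ O | v ≠ 0 ∧ ¬ Reducible O v}

/-- `Ŝ_t = {v ∈ O±_t : v0 ≤ b or v2 ≤ a}`. -/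
def Shat (a b d t : ℤ) : Set (ℤ × ℤ × ℤ) :=
  {v ∈ OPm a b d t | v.1 ≤ b ∨ v.2.2 ≤ a}

/-- The piecewise map `φ̂`, given by `φ12` when `v0 ≤ b`, and `φ01` otherwise. -/
def phihat (a b : ℤ) (v : ℤ × ℤ × ℤ) : ℤ × ℤ × ℤ :=
  if v.1 ≤ b then phi12 a b v else phi01 a b v

set_option maxHeartbeats 1000000

lemma phi12_eq (a b : ℤ) (v : ℤ × ℤ × ℤ) :
    phi12 a b v = (v.1, v.2.1 + a * (a + b) * len3 v, v.2.2 - a * (a + b) * len3 v) := by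
  simp [phi12, Prod.ext_iff]
  ring

lemma key_id {a b d s : ℤ} {v : ℤ × ℤ × ℤ} (h : v ∈ L3 a b d s) :
    (s + d * b) * len3 v = d * ((a + b) * v.1 + b * v.2.1) := by
  have h' : pi3 a b d s v = 0 := h
  unfold pi3 at h'
  unfold len3
  linear_combination h'

lemma len_nonneg {a b d s : ℤ} {v : ℤ × ℤ × ℤ} (ha : 0 ≤ a) (hb : 0 ≤ b) (hd : 0 ≤ d)
    (hs : 0 < s + d * b) (h : v ∈ OPlus a b d s) : 0 ≤ len3 v := by
  obtain ⟨hL, h0, h1⟩ := h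
  have hk := key_id (a := a) (b := b) hL
  have hrhs : 0 ≤ d * ((a + b) * v.1 + b * v.2.1) :=
    mul_nonneg hd (add_nonneg (mul_nonneg (add_nonneg ha hb) h0) (mul_nonneg hb h1))
  have h2 : (s + d * b) * 0 ≤ (s + d * b) * len3 v := by rw [hk]; simpa using hrhs
  exact le_of_mul_le_mul_left h2 hs

lemma d_dvd_len {a b d s : ℤ} {v : ℤ × ℤ × ℤ} (hsd : IsCoprime s d)
    (h : v ∈ L3 a b d s) : d ∣ len3 v := by
  have hco : IsCoprime (s + d * b) d := by
    simpa using (IsCoprime.add_mul_left_left hsd b)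
  have hdvd : d ∣ (s + d * b) * len3 v := ⟨(a + b) * v.1 + b * v.2.1, key_id h⟩
  exact (hco.symm.dvd_of_dvd_mul_left hdvd)

lemma triple_ne_zero {x y z : ℤ} (h : ((x, y, z) : ℤ × ℤ × ℤ) = 0) :
    x = 0 ∧ y = 0 ∧ z = 0 := by
  simpa [Prod.ext_iff] using h

lemma triple_eq_zero {U : ℤ × ℤ × ℤ} (h1 : U.1 = 0) (h2 : U.2.1 = 0) (h3 : U.2.2 = 0) :
    U = 0 := by
  rw [Prod.ext_iff, Prod.ext_iff]
  exact ⟨h1, h2, h3⟩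

theorem aux12 (a b d t : ℤ) (ha : 1 ≤ a) (hb : 1 ≤ b) (hd : 1 ≤ d)
    (htd : Int.gcd t d = 1) (ht : d * a < t)
    (hBp : (b - 1) * (a + b) - b * (d + 1) < t)
    (v : ℤ × ℤ × ℤ) (hv : v ∈ OPlus a b d t) (hv0 : v.1 < b) :
    Reducible (OPlus a b d (t + d * a * b * (a + b))) (phi12 a b v) ↔
      Reducible (OPlus a b d t) v := by
  obtain ⟨hvL, hva, hvb⟩ := hv
  have hvL' : pi3 a b d t v = 0 := hvL
  have htpos : 0 < t + d * b := by nlinarith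
  have hTpos : 0 < t + d * a * b * (a + b) + d * b := by
    have h1 : (0:ℤ) ≤ d * a * b * (a + b) := by positivity
    have h2 : (0:ℤ) ≤ d * b := by positivity
    nlinarith
  have hcop : IsCoprime t d := Int.isCoprime_iff_gcd_eq_one.mpr htd
  constructor
  · rintro ⟨U, W, ⟨hUL, hU0, hU1⟩, ⟨hWL, hW0, hW1⟩, hUne, hWne, hUW⟩
    have hULeq : pi3 a b d (t + d * a * b * (a + b)) U = 0 := hUL
    have hWLeq : pi3 a b d (t + d * a * b * (a + b)) W = 0 := hWL
    rw [phi12_eq] at hUW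
    obtain ⟨e0, e1, e2⟩ : v.1 = U.1 + W.1 ∧
        v.2.1 + a * (a + b) * len3 v = U.2.1 + W.2.1 ∧
        v.2.2 - a * (a + b) * len3 v = U.2.2 + W.2.2 := by
      simpa [Prod.ext_iff] using hUW
    have hlenv : len3 v = len3 U + len3 W := by unfold len3; linarith
    have hlU : 0 ≤ len3 U := len_nonneg (by linarith) (by linarith) (by linarith) hTpos
      ⟨hUL, hU0, hU1⟩
    have hlW : 0 ≤ len3 W := len_nonneg (by linarith) (by linarith) (by linarith) hTpos
      ⟨hWL, hW0, hW1⟩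
    have hlenU : len3 U = U.1 + U.2.1 + U.2.2 := rfl
    have hlenW : len3 W = W.1 + W.2.1 + W.2.2 := rfl
    have huL : pi3 a b d t
        (U.1, U.2.1 - a * (a + b) * len3 U, U.2.2 + a * (a + b) * len3 U) = 0 := by
      unfold pi3 at hULeq ⊢
      linear_combination hULeq + (d * a * b * (a + b)) * hlenU
    have hwL : pi3 a b d t
        (W.1, W.2.1 - a * (a + b) * len3 W, W.2.2 + a * (a + b) * len3 W) = 0 := by
      unfold pi3 at hWLeq ⊢
      linear_combination hWLeq + (d * a * b * (a + b)) * hlenW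
    have hdvdU : d ∣ len3 U := by
      have h := d_dvd_len hcop huL
      have hx : len3 (U.1, U.2.1 - a * (a + b) * len3 U, U.2.2 + a * (a + b) * len3 U)
          = len3 U := by simp only [len3]; ring
      rwa [hx] at h
    have hdvdW : d ∣ len3 W := by
      have h := d_dvd_len hcop hwL
      have hx : len3 (W.1, W.2.1 - a * (a + b) * len3 W, W.2.2 + a * (a + b) * len3 W)
          = len3 W := by simp only [len3]; ring
      rwa [hx] at h
    have hkU := key_id (a := a) (b := b) (d := d) (s := t) huL
    have hkW := key_id (a := a) (b := b) (d := d) (s := t) hwL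
    simp only [len3] at hkU hkW
    have hUb : U.1 ≤ b - 1 := by
      have h : U.1 < b := by linarith
      linarith [Int.lt_iff_add_one_le.mp h]
    have hWb : W.1 ≤ b - 1 := by
      have h : W.1 < b := by linarith
      linarith [Int.lt_iff_add_one_le.mp h]
    have hu1 : 0 ≤ U.2.1 - a * (a + b) * len3 U := by
      rcases eq_or_lt_of_le hlU with h0 | hpos
      · have hz : a * (a + b) * len3 U = 0 := by rw [← h0]; ring
        linarith
      · have hld : d ≤ len3 U := Int.le_of_dvd hpos hdvdU
        by_contra hcon
        push_neg at hcon
        have hcon' : U.2.1 - a * (a + b) * len3 U ≤ -1 := by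
          linarith [Int.lt_iff_add_one_le.mp hcon]
        nlinarith [mul_le_mul_of_nonneg_left hld (le_of_lt htpos),
          mul_le_mul_of_nonneg_left hUb (by positivity : (0:ℤ) ≤ d * (a + b)),
          mul_le_mul_of_nonneg_left hcon' (by positivity : (0:ℤ) ≤ d * b),
          mul_lt_mul_of_pos_left hBp (by positivity : (0:ℤ) < d), hkU, hlenU]
    have hw1 : 0 ≤ W.2.1 - a * (a + b) * len3 W := by
      rcases eq_or_lt_of_le hlW with h0 | hpos
      · have hz : a * (a + b) * len3 W = 0 := by rw [← h0]; ring
        linarith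
      · have hld : d ≤ len3 W := Int.le_of_dvd hpos hdvdW
        by_contra hcon
        push_neg at hcon
        have hcon' : W.2.1 - a * (a + b) * len3 W ≤ -1 := by
          linarith [Int.lt_iff_add_one_le.mp hcon]
        nlinarith [mul_le_mul_of_nonneg_left hld (le_of_lt htpos),
          mul_le_mul_of_nonneg_left hWb (by positivity : (0:ℤ) ≤ d * (a + b)),
          mul_le_mul_of_nonneg_left hcon' (by positivity : (0:ℤ) ≤ d * b),
          mul_lt_mul_of_pos_left hBp (by positivity : (0:ℤ) < d), hkW, hlenW]
    refine ⟨(U.1, U.2.1 - a * (a + b) * len3 U, U.2.2 + a * (a + b) * len3 U),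
      (W.1, W.2.1 - a * (a + b) * len3 W, W.2.2 + a * (a + b) * len3 W),
      ⟨huL, hU0, hu1⟩, ⟨hwL, hW0, hw1⟩, ?_, ?_, ?_⟩
    · intro h
      obtain ⟨h1, h2, h3⟩ := triple_ne_zero h
      have hl0 : len3 U = 0 := by linear_combination hlenU + h1 + h2 + h3
      exact hUne (triple_eq_zero h1 (by linear_combination h2 + a * (a + b) * hl0)
        (by linear_combination h3 - a * (a + b) * hl0))
    · intro h
      obtain ⟨h1, h2, h3⟩ := triple_ne_zero h
      have hl0 : len3 W = 0 := by linear_combination hlenW + h1 + h2 + h3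
      exact hWne (triple_eq_zero h1 (by linear_combination h2 + a * (a + b) * hl0)
        (by linear_combination h3 - a * (a + b) * hl0))
    · rw [Prod.ext_iff, Prod.ext_iff]
      simp only [Prod.fst_add, Prod.snd_add]
      exact ⟨e0, by linear_combination e1 - a * (a + b) * hlenv,
        by linear_combination e2 + a * (a + b) * hlenv⟩
  · rintro ⟨u, w, ⟨huL, hu0, hu1⟩, ⟨hwL, hw0, hw1⟩, hune, hwne, huw⟩
    have huLeq : pi3 a b d t u = 0 := huL
    have hwLeq : pi3 a b d t w = 0 := hwL
    have hlu : 0 ≤ len3 u := len_nonneg (by linarith) (by linarith) (by linarith) htpos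
      ⟨huL, hu0, hu1⟩
    have hlw : 0 ≤ len3 w := len_nonneg (by linarith) (by linarith) (by linarith) htpos
      ⟨hwL, hw0, hw1⟩
    have hlenu : len3 u = u.1 + u.2.1 + u.2.2 := rfl
    have hlenw : len3 w = w.1 + w.2.1 + w.2.2 := rfl
    obtain ⟨e0, e1, e2⟩ : v.1 = u.1 + w.1 ∧ v.2.1 = u.2.1 + w.2.1 ∧
        v.2.2 = u.2.2 + w.2.2 := by
      rw [huw]; exact ⟨rfl, rfl, rfl⟩
    have hlenv : len3 v = len3 u + len3 w := by unfold len3; linarith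
    have hab2 : (0:ℤ) ≤ a * (a + b) := by positivity
    refine ⟨phi12 a b u, phi12 a b w, ?_, ?_, ?_, ?_, ?_⟩
    · rw [phi12_eq]
      refine ⟨?_, hu0, ?_⟩
      · show pi3 a b d _ _ = 0
        unfold pi3 at huLeq ⊢
        linear_combination huLeq - (d * a * b * (a + b)) * hlenu
      · show (0:ℤ) ≤ u.2.1 + a * (a + b) * len3 u
        nlinarith
    · rw [phi12_eq]
      refine ⟨?_, hw0, ?_⟩
      · show pi3 a b d _ _ = 0
        unfold pi3 at hwLeq ⊢
        linear_combination hwLeq - (d * a * b * (a + b)) * hlenw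
      · show (0:ℤ) ≤ w.2.1 + a * (a + b) * len3 w
        nlinarith
    · intro h
      rw [phi12_eq] at h
      obtain ⟨h1, h2, h3⟩ := triple_ne_zero h
      have hl0 : len3 u = 0 := by linear_combination hlenu + h1 + h2 + h3
      exact hune (triple_eq_zero h1 (by linear_combination h2 - a * (a + b) * hl0)
        (by linear_combination h3 + a * (a + b) * hl0))
    · intro h
      rw [phi12_eq] at h
      obtain ⟨h1, h2, h3⟩ := triple_ne_zero h
      have hl0 : len3 w = 0 := by linear_combination hlenw + h1 + h2 + h3
      exact hwne (triple_eq_zero h1 (by linear_combination h2 - a * (a + b) * hl0)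
        (by linear_combination h3 + a * (a + b) * hl0))
    · rw [phi12_eq, phi12_eq, phi12_eq, Prod.ext_iff, Prod.ext_iff]
      refine ⟨e0, ?_, ?_⟩
      · show v.2.1 + a * (a + b) * len3 v =
          ((u.1, u.2.1 + a * (a + b) * len3 u, u.2.2 - a * (a + b) * len3 u) +
           (w.1, w.2.1 + a * (a + b) * len3 w, w.2.2 - a * (a + b) * len3 w)).2.1
        show v.2.1 + a * (a + b) * len3 v =
          (u.2.1 + a * (a + b) * len3 u) + (w.2.1 + a * (a + b) * len3 w)
        linear_combination e1 + a * (a + b) * hlenv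
      · show v.2.2 - a * (a + b) * len3 v =
          (u.2.2 - a * (a + b) * len3 u) + (w.2.2 - a * (a + b) * len3 w)
        linear_combination e2 - a * (a + b) * hlenv

lemma phi02_eq (a b : ℤ) (v : ℤ × ℤ × ℤ) :
    phi02 a b v = (v.1 + a * b * len3 v, v.2.1, v.2.2 - a * b * len3 v) := by
  simp [phi02, Prod.ext_iff]
  ring

theorem aux02 (a b d t : ℤ) (ha : 1 ≤ a) (hb : 1 ≤ b) (hd : 1 ≤ d)
    (htd : Int.gcd t d = 1) (ht : d * a < t)
    (hBp : (b - 1) * (a + b) - b * (d + 1) < t)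
    (v : ℤ × ℤ × ℤ) (hv : v ∈ OPlus a b d t) (hv1 : v.2.1 < a + b) :
    Reducible (OPlus a b d (t + d * a * b * (a + b))) (phi02 a b v) ↔
      Reducible (OPlus a b d t) v := by
  obtain ⟨hvL, hva, hvb⟩ := hv
  have hvL' : pi3 a b d t v = 0 := hvL
  have htpos : 0 < t + d * b := by nlinarith
  have hTpos : 0 < t + d * a * b * (a + b) + d * b := by
    have h1 : (0:ℤ) ≤ d * a * b * (a + b) := by positivity
    have h2 : (0:ℤ) ≤ d * b := by positivity
    nlinarith
  have hcop : IsCoprime t d := Int.isCoprime_iff_gcd_eq_one.mpr htd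
  constructor
  · rintro ⟨U, W, ⟨hUL, hU0, hU1⟩, ⟨hWL, hW0, hW1⟩, hUne, hWne, hUW⟩
    have hULeq : pi3 a b d (t + d * a * b * (a + b)) U = 0 := hUL
    have hWLeq : pi3 a b d (t + d * a * b * (a + b)) W = 0 := hWL
    rw [phi02_eq] at hUW
    obtain ⟨e0, e1, e2⟩ : v.1 + a * b * len3 v = U.1 + W.1 ∧
        v.2.1 = U.2.1 + W.2.1 ∧
        v.2.2 - a * b * len3 v = U.2.2 + W.2.2 := by
      simpa [Prod.ext_iff] using hUW
    have hlenv : len3 v = len3 U + len3 W := by unfold len3; linarith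
    have hlU : 0 ≤ len3 U := len_nonneg (by linarith) (by linarith) (by linarith) hTpos
      ⟨hUL, hU0, hU1⟩
    have hlW : 0 ≤ len3 W := len_nonneg (by linarith) (by linarith) (by linarith) hTpos
      ⟨hWL, hW0, hW1⟩
    have hlenU : len3 U = U.1 + U.2.1 + U.2.2 := rfl
    have hlenW : len3 W = W.1 + W.2.1 + W.2.2 := rfl
    have huL : pi3 a b d t
        (U.1 - a * b * len3 U, U.2.1, U.2.2 + a * b * len3 U) = 0 := by
      unfold pi3 at hULeq ⊢
      linear_combination hULeq + (d * a * b * (a + b)) * hlenU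
    have hwL : pi3 a b d t
        (W.1 - a * b * len3 W, W.2.1, W.2.2 + a * b * len3 W) = 0 := by
      unfold pi3 at hWLeq ⊢
      linear_combination hWLeq + (d * a * b * (a + b)) * hlenW
    have hdvdU : d ∣ len3 U := by
      have h := d_dvd_len hcop huL
      have hx : len3 (U.1 - a * b * len3 U, U.2.1, U.2.2 + a * b * len3 U)
          = len3 U := by simp only [len3]; ring
      rwa [hx] at h
    have hdvdW : d ∣ len3 W := by
      have h := d_dvd_len hcop hwL
      have hx : len3 (W.1 - a * b * len3 W, W.2.1, W.2.2 + a * b * len3 W)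
          = len3 W := by simp only [len3]; ring
      rwa [hx] at h
    have hkU := key_id (a := a) (b := b) (d := d) (s := t) huL
    have hkW := key_id (a := a) (b := b) (d := d) (s := t) hwL
    simp only [len3] at hkU hkW
    have hUb : U.2.1 ≤ a + b - 1 := by
      have h : U.2.1 < a + b := by linarith
      linarith [Int.lt_iff_add_one_le.mp h]
    have hWb : W.2.1 ≤ a + b - 1 := by
      have h : W.2.1 < a + b := by linarith
      linarith [Int.lt_iff_add_one_le.mp h]
    have hu0 : 0 ≤ U.1 - a * b * len3 U := by
      rcases eq_or_lt_of_le hlU with h0 | hpos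
      · have hz : a * b * len3 U = 0 := by rw [← h0]; ring
        linarith
      · have hld : d ≤ len3 U := Int.le_of_dvd hpos hdvdU
        by_contra hcon
        push_neg at hcon
        have hcon' : U.1 - a * b * len3 U ≤ -1 := by
          linarith [Int.lt_iff_add_one_le.mp hcon]
        nlinarith [mul_le_mul_of_nonneg_left hld (le_of_lt htpos),
          mul_le_mul_of_nonneg_left hUb (by positivity : (0:ℤ) ≤ d * b),
          mul_le_mul_of_nonneg_left hcon' (by positivity : (0:ℤ) ≤ d * (a + b)),
          mul_lt_mul_of_pos_left hBp (by positivity : (0:ℤ) < d), hkU, hlenU]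
    have hw0 : 0 ≤ W.1 - a * b * len3 W := by
      rcases eq_or_lt_of_le hlW with h0 | hpos
      · have hz : a * b * len3 W = 0 := by rw [← h0]; ring
        linarith
      · have hld : d ≤ len3 W := Int.le_of_dvd hpos hdvdW
        by_contra hcon
        push_neg at hcon
        have hcon' : W.1 - a * b * len3 W ≤ -1 := by
          linarith [Int.lt_iff_add_one_le.mp hcon]
        nlinarith [mul_le_mul_of_nonneg_left hld (le_of_lt htpos),
          mul_le_mul_of_nonneg_left hWb (by positivity : (0:ℤ) ≤ d * b),
          mul_le_mul_of_nonneg_left hcon' (by positivity : (0:ℤ) ≤ d * (a + b)),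
          mul_lt_mul_of_pos_left hBp (by positivity : (0:ℤ) < d), hkW, hlenW]
    refine ⟨(U.1 - a * b * len3 U, U.2.1, U.2.2 + a * b * len3 U),
      (W.1 - a * b * len3 W, W.2.1, W.2.2 + a * b * len3 W),
      ⟨huL, hu0, hU1⟩, ⟨hwL, hw0, hW1⟩, ?_, ?_, ?_⟩
    · intro h
      obtain ⟨h1, h2, h3⟩ := triple_ne_zero h
      have hl0 : len3 U = 0 := by linear_combination hlenU + h1 + h2 + h3
      exact hUne (triple_eq_zero (by linear_combination h1 + a * b * hl0) h2
        (by linear_combination h3 - a * b * hl0))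
    · intro h
      obtain ⟨h1, h2, h3⟩ := triple_ne_zero h
      have hl0 : len3 W = 0 := by linear_combination hlenW + h1 + h2 + h3
      exact hWne (triple_eq_zero (by linear_combination h1 + a * b * hl0) h2
        (by linear_combination h3 - a * b * hl0))
    · rw [Prod.ext_iff, Prod.ext_iff]
      simp only [Prod.fst_add, Prod.snd_add]
      exact ⟨by linear_combination e0 - a * b * hlenv, e1,
        by linear_combination e2 + a * b * hlenv⟩
  · rintro ⟨u, w, ⟨huL, hu0, hu1⟩, ⟨hwL, hw0, hw1⟩, hune, hwne, huw⟩
    have huLeq : pi3 a b d t u = 0 := huL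
    have hwLeq : pi3 a b d t w = 0 := hwL
    have hlu : 0 ≤ len3 u := len_nonneg (by linarith) (by linarith) (by linarith) htpos
      ⟨huL, hu0, hu1⟩
    have hlw : 0 ≤ len3 w := len_nonneg (by linarith) (by linarith) (by linarith) htpos
      ⟨hwL, hw0, hw1⟩
    have hlenu : len3 u = u.1 + u.2.1 + u.2.2 := rfl
    have hlenw : len3 w = w.1 + w.2.1 + w.2.2 := rfl
    obtain ⟨e0, e1, e2⟩ : v.1 = u.1 + w.1 ∧ v.2.1 = u.2.1 + w.2.1 ∧
        v.2.2 = u.2.2 + w.2.2 := by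
      rw [huw]; exact ⟨rfl, rfl, rfl⟩
    have hlenv : len3 v = len3 u + len3 w := by unfold len3; linarith
    have hab2 : (0:ℤ) ≤ a * b := by positivity
    refine ⟨phi02 a b u, phi02 a b w, ?_, ?_, ?_, ?_, ?_⟩
    · rw [phi02_eq]
      refine ⟨?_, ?_, hu1⟩
      · show pi3 a b d _ _ = 0
        unfold pi3 at huLeq ⊢
        linear_combination huLeq - (d * a * b * (a + b)) * hlenu
      · show (0:ℤ) ≤ u.1 + a * b * len3 u
        nlinarith
    · rw [phi02_eq]
      refine ⟨?_, ?_, hw1⟩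
      · show pi3 a b d _ _ = 0
        unfold pi3 at hwLeq ⊢
        linear_combination hwLeq - (d * a * b * (a + b)) * hlenw
      · show (0:ℤ) ≤ w.1 + a * b * len3 w
        nlinarith
    · intro h
      rw [phi02_eq] at h
      obtain ⟨h1, h2, h3⟩ := triple_ne_zero h
      have hl0 : len3 u = 0 := by linear_combination hlenu + h1 + h2 + h3
      exact hune (triple_eq_zero (by linear_combination h1 - a * b * hl0) h2
        (by linear_combination h3 + a * b * hl0))
    · intro h
      rw [phi02_eq] at h
      obtain ⟨h1, h2, h3⟩ := triple_ne_zero h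
      have hl0 : len3 w = 0 := by linear_combination hlenw + h1 + h2 + h3
      exact hwne (triple_eq_zero (by linear_combination h1 - a * b * hl0) h2
        (by linear_combination h3 + a * b * hl0))
    · rw [phi02_eq, phi02_eq, phi02_eq, Prod.ext_iff, Prod.ext_iff]
      simp only [Prod.fst_add, Prod.snd_add]
      exact ⟨by linear_combination e0 + a * b * hlenv, e1,
        by linear_combination e2 - a * b * hlenv⟩

theorem ppn_strip_maps_preserve_reducibility (a b d t : ℤ) (ha : 1 ≤ a) (hb : 1 ≤ b) (hd : 1 ≤ d)
    (hab : Int.gcd a b = 1) (ht : d * a < t) (htd : Int.gcd t d = 1)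
    (hBp : (b - 1) * (a + b) - b * (d + 1) < t) :
    (∀ v ∈ OPlus a b d t, v.1 < b →
        (Reducible (OPlus a b d (t + d * a * b * (a + b))) (phi12 a b v) ↔
          Reducible (OPlus a b d t) v)) ∧
    (∀ v ∈ OPlus a b d t, v.2.1 < a + b →
        (Reducible (OPlus a b d (t + d * a * b * (a + b))) (phi02 a b v) ↔
          Reducible (OPlus a b d t) v)) :=
  ⟨fun v hv h => aux12 a b d t ha hb hd htd ht hBp v hv h,
   fun v hv h => aux02 a b d t ha hb hd htd ht hBp v hv h⟩
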